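/- arXiv:2009.02477 — 2 statements merged into one kernel-verified Lean document; each statement's English description precedes it below -/
import Mathlib

section
/- An element a of a complex unital Banach algebra A has a g-Drazin inverse if and only if there exist an idempotent e, an invertible element u, and a quasinilpotent w, pairwise commuting, such that a = eu + w. -/
open Filter Finset

/-- An element of a complex (Banach) algebra is quasinilpotent if its spectral radius is zero. -/
noncomputable def Quasinilpotent {A : Type*} [Ring A] [Algebra ℂ A] (q : A) : Prop :=
  spectralRadius ℂ q = 0

/-- `a` has a generalized Drazin inverse: some `b` with `ab = ba`, `b = bab`,
and `a - a²b` quasinilpotent. -/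
noncomputable def HasGDrazin {A : Type*} [Ring A] [Algebra ℂ A] (a : A) : Prop :=
  ∃ b : A, a * b = b * a ∧ b = b * a * b ∧ Quasinilpotent (a - a ^ 2 * b)

/-! If `b` is a g-Drazin inverse of `a`, then `e = ab` is an idempotent commuting with `a`,
`ea + (1 - e)` is invertible with inverse `eb + (1 - e)`, and `a - ea = a - a²b` is
quasinilpotent. Conversely, if `a = eu + w`, then `u + w = u(1 + u⁻¹w)` is invertible because
`u⁻¹w` is quasinilpotent by Gelfand's formula, and `b = e(u + w)⁻¹` is a g-Drazin inverse of
`a`: it satisfies `ab = ba = e` and `a - a²b = (1 - e)w`. -/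

open ENNReal

section Ring

variable {R : Type*} [Ring R] {e x y : R}

theorem IsIdempotentElem.mul_add_one_sub_mul_eq_one (he : IsIdempotentElem e)
    (hx : Commute e x) (hxy : e * (x * y) = e) :
    (e * x + (1 - e)) * (e * y + (1 - e)) = 1 := by
  have hex : e * x * (e * y) = e := by
    rw [mul_assoc, ← mul_assoc x, ← hx.eq, mul_assoc, ← mul_assoc, he.eq, hxy]
  have hx1 : e * x * (1 - e) = 0 := by
    rw [hx.eq, mul_assoc, he.mul_one_sub_self, mul_zero]
  have hy1 : (1 - e) * (e * y) = 0 := by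
    rw [← mul_assoc, he.one_sub_mul_self, zero_mul]
  rw [mul_add, add_mul, add_mul, hex, hx1, hy1, he.one_sub.eq]
  abel

theorem IsIdempotentElem.isUnit_mul_add_one_sub (he : IsIdempotentElem e)
    (hx : Commute e x) (hy : Commute e y) (hxy : e * (x * y) = e) (hyx : e * (y * x) = e) :
    IsUnit (e * x + (1 - e)) :=
  ⟨⟨_, _, he.mul_add_one_sub_mul_eq_one hx hxy, he.mul_add_one_sub_mul_eq_one hy hyx⟩, rfl⟩

end Ring

section Algebra

variable {A : Type*} [Ring A] [Algebra ℂ A]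

theorem HasGDrazin.exists_isIdempotentElem_isUnit_quasinilpotent {a : A} (h : HasGDrazin a) :
    ∃ e u w : A, IsIdempotentElem e ∧ IsUnit u ∧ Quasinilpotent w ∧
      Commute e u ∧ Commute e w ∧ Commute u w ∧ a = e * u + w := by
  obtain ⟨b, hab, hbab, hq⟩ := h
  have hab' : Commute a b := hab
  have hsq : a ^ 2 * b = a * b * a := by rw [sq, mul_assoc, hab, ← mul_assoc, ← hab]
  have he : IsIdempotentElem (a * b) := by
    rw [IsIdempotentElem, mul_assoc, ← mul_assoc b, ← hbab]
  set e := a * b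
  have hea : Commute e a := (Commute.refl a).mul_left hab'.symm
  have heb : Commute e b := hab'.mul_left (Commute.refl b)
  have hee := Commute.refl e
  have hua : Commute (e * a + (1 - e)) a :=
    (hea.mul_left (.refl a)).add_left ((Commute.one_left a).sub_left hea)
  have hue : Commute (e * a + (1 - e)) e :=
    (hee.mul_left hea.symm).add_left ((Commute.one_left e).sub_left hee)
  refine ⟨e, e * a + (1 - e), a - e * a, he,
    he.isUnit_mul_add_one_sub hea heb he.eq (by rw [← hab, he.eq]), ?_,
    hue.symm, hea.sub_right (hee.mul_right hea), hua.sub_right (hue.mul_right hua), ?_⟩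
  · rwa [hsq] at hq
  · rw [mul_add, ← mul_assoc, he.eq, mul_sub, mul_one, he.eq]
    abel

end Algebra

section NormedAlgebra

variable {A : Type*} [NormedRing A] [NormedAlgebra ℂ A]

theorem Quasinilpotent.isUnit_one_add {q : A} (hq : Quasinilpotent q) : IsUnit (1 + q) := by
  have h : (-1 : ℂ) ∈ resolventSet ℂ q :=
    spectrum.mem_resolventSet_of_spectralRadius_lt
      (by simp [show spectralRadius ℂ q = 0 from hq])
  rw [spectrum.mem_resolventSet_iff] at h
  simpa [Algebra.algebraMap_eq_smul_one, add_comm] using h.neg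

variable [CompleteSpace A]

theorem Commute.spectralRadius_mul_le {c w : A} (h : Commute c w) :
    spectralRadius ℂ (c * w) ≤ ‖c‖₊ * spectralRadius ℂ w := by
  refine le_of_tendsto_of_tendsto (spectrum.gelfand_formula (c * w))
    (ENNReal.Tendsto.const_mul (spectrum.gelfand_formula w) (Or.inr coe_ne_top)) ?_
  filter_upwards [eventually_ne_atTop 0] with n hn
  rw [h.mul_pow]
  calc (‖c ^ n * w ^ n‖₊ : ℝ≥0∞) ^ (1 / n : ℝ)
      ≤ ((‖c‖₊ : ℝ≥0∞) ^ n * ‖w ^ n‖₊) ^ (1 / n : ℝ) := by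
        gcongr
        exact_mod_cast (nnnorm_mul_le _ _).trans
          (mul_le_mul_left (nnnorm_pow_le' c (Nat.pos_of_ne_zero hn)) _)
    _ = ‖c‖₊ * (‖w ^ n‖₊ : ℝ≥0∞) ^ (1 / n : ℝ) := by
        rw [ENNReal.mul_rpow_of_nonneg _ _ (by positivity), one_div,
          ENNReal.pow_rpow_inv_natCast hn]

theorem Quasinilpotent.commute_mul {c w : A} (hw : Quasinilpotent w) (h : Commute c w) :
    Quasinilpotent (c * w) :=
  le_antisymm (by simpa [show spectralRadius ℂ w = 0 from hw] using h.spectralRadius_mul_le)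
    bot_le

theorem Quasinilpotent.isUnit_add {u w : A} (hw : Quasinilpotent w) (hu : IsUnit u)
    (h : Commute u w) : IsUnit (u + w) := by
  obtain ⟨u, rfl⟩ := hu
  have : (u : A) + w = u * (1 + ↑u⁻¹ * w) := by rw [mul_add, mul_one, u.mul_inv_cancel_left]
  rw [this]
  exact u.isUnit.mul (hw.commute_mul h.units_inv_left).isUnit_one_add

theorem hasGDrazin_mul_add_of_isIdempotentElem {e u w : A} (he : IsIdempotentElem e)
    (hu : IsUnit u) (hw : Quasinilpotent w) (heu : Commute e u) (hew : Commute e w)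
    (huw : Commute u w) : HasGDrazin (e * u + w) := by
  obtain ⟨x, hx⟩ := hw.isUnit_add hu huw
  have hex : Commute e x := hx ▸ heu.add_right hew
  have hea : Commute e (e * u + w) := ((Commute.refl e).mul_right heu).add_right hew
  have hxa : Commute (x : A) (e * u + w) := hx ▸
    ((heu.symm.mul_right (.refl u)).add_right huw).add_left
      ((hew.symm.mul_right huw.symm).add_right (.refl w))
  have hae : (e * u + w) * e = e * x := by
    rw [← hea.eq, hx, mul_add, ← mul_assoc, he.eq, mul_add]
  have hab : (e * u + w) * (e * ↑x⁻¹) = e := by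
    rw [← mul_assoc, hae, mul_assoc, x.mul_inv, mul_one]
  refine ⟨e * ↑x⁻¹, hea.symm.mul_right hxa.units_inv_left.symm, ?_, ?_⟩
  · rw [mul_assoc, hab, mul_assoc, ← hex.units_inv_right.eq, ← mul_assoc, he.eq]
  · have : e * u + w - (e * u + w) ^ 2 * (e * ↑x⁻¹) = (1 - e) * w := by
      rw [sq, mul_assoc, hab, hae, hx]
      noncomm_ring
    rw [this]
    exact hw.commute_mul ((Commute.one_left w).sub_left hew)

end NormedAlgebra

theorem stmt6 {A : Type*} [NormedRing A] [NormedAlgebra ℂ A] [CompleteSpace A] (a : A) :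
    HasGDrazin a ↔ ∃ e u w : A, e * e = e ∧ IsUnit u ∧ Quasinilpotent w ∧
      e * u = u * e ∧ e * w = w * e ∧ u * w = w * u ∧ a = e * u + w := by
  refine ⟨HasGDrazin.exists_isIdempotentElem_isUnit_quasinilpotent, ?_⟩
  rintro ⟨e, u, w, he, hu, hw, heu, hew, huw, rfl⟩
  exact hasGDrazin_mul_add_of_isIdempotentElem he hu hw heu hew huw
end

section
/- Let A be a complex unital Banach algebra and x ∈ A. Then x has strongly g-Drazin inverse (i.e., x is the sum of a commuting idempotent and quasinilpotent) if and only if x − x² is quasinilpotent. -/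
/-!
If `x - x²` is quasinilpotent, then `s = 2x - 1` satisfies `s² = 1 - 4(x - x²)`, a quasinilpotent
perturbation of `1`. The binomial series of `(1 + y) ^ r` converges at every quasinilpotent `y`
(Gelfand's formula) and obeys the exponent law (Vandermonde's identity), so `t = s (s²) ^ (-1/2)`
is an involution commuting with `x`, and `s - t = -s ((s²) ^ (-1/2) - 1)` is quasinilpotent.
Then `e = (1 + t) / 2` is an idempotent with `x - e = (s - t) / 2`.
Conversely, `x - x² = (1 - 2e - w) w` is the product of commuting elements one of which is
quasinilpotent.
-/

open Filter Finset

open scoped Topology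

section Quasinilpotent

variable {A : Type*} [NormedRing A] [NormedAlgebra ℂ A] [CompleteSpace A]

theorem quasinilpotent_iff_tendsto_norm_pow_rpow {a : A} :
    Quasinilpotent a ↔ Tendsto (fun n : ℕ => ‖a ^ n‖ ^ (1 / n : ℝ)) atTop (𝓝 0) := by
  have gelfand := spectrum.pow_norm_pow_one_div_tendsto_nhds_spectralRadius a
  constructor
  · intro ha
    rw [Quasinilpotent] at ha
    rw [ha] at gelfand
    refine ((ENNReal.tendsto_toReal ENNReal.zero_ne_top).comp gelfand).congr fun n => ?_
    exact ENNReal.toReal_ofReal (by positivity)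
  · intro h
    simpa [Quasinilpotent] using tendsto_nhds_unique gelfand (ENNReal.tendsto_ofReal h)

theorem Commute.quasinilpotent_mul_left {a b : A} (h : Commute a b) (hb : Quasinilpotent b) :
    Quasinilpotent (a * b) := by
  rw [quasinilpotent_iff_tendsto_norm_pow_rpow] at hb ⊢
  refine squeeze_zero' (Eventually.of_forall fun n => by positivity) ?_
    (by simpa only [mul_zero] using hb.const_mul ‖a‖)
  filter_upwards [eventually_ne_atTop 0] with n hn
  calc ‖(a * b) ^ n‖ ^ (1 / n : ℝ) ≤ (‖a‖ ^ n * ‖b ^ n‖) ^ (1 / n : ℝ) := by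
        rw [h.mul_pow]
        gcongr
        exact (norm_mul_le _ _).trans
          (by gcongr; exact norm_pow_le' a (Nat.pos_of_ne_zero hn))
    _ = ‖a‖ * ‖b ^ n‖ ^ (1 / n : ℝ) := by
        rw [Real.mul_rpow (by positivity) (norm_nonneg _), one_div,
          Real.pow_rpow_inv_natCast (norm_nonneg _) hn]

theorem Quasinilpotent.smul {a : A} (ha : Quasinilpotent a) (c : ℂ) :
    Quasinilpotent (c • a) := by
  rw [Algebra.smul_def]
  exact (Algebra.commute_algebraMap_left c a).quasinilpotent_mul_left ha

theorem Quasinilpotent.eventually_norm_pow_le {a : A} (ha : Quasinilpotent a) {ε : ℝ}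
    (hε : 0 < ε) : ∀ᶠ n : ℕ in atTop, ‖a ^ n‖ ≤ ε ^ n := by
  filter_upwards [(quasinilpotent_iff_tendsto_norm_pow_rpow.mp ha).eventually_le_const hε,
    eventually_ne_atTop 0] with n hroot hn
  rw [one_div] at hroot
  calc ‖a ^ n‖ = (‖a ^ n‖ ^ (n⁻¹ : ℝ)) ^ n :=
        (Real.rpow_inv_natCast_pow (norm_nonneg _) hn).symm
    _ ≤ ε ^ n := by gcongr

theorem Quasinilpotent.summable_pow_mul_norm_pow {a : A} (ha : Quasinilpotent a) (R : ℝ) :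
    Summable fun n => R ^ n * ‖a ^ n‖ := by
  have hR : 0 < 2 * (|R| + 1) := by positivity
  refine Summable.of_norm_bounded_eventually_nat summable_geometric_two ?_
  filter_upwards [ha.eventually_norm_pow_le (inv_pos.mpr hR)] with n hn
  calc ‖R ^ n * ‖a ^ n‖‖ = |R| ^ n * ‖a ^ n‖ := by
        rw [norm_mul, norm_norm, norm_pow, Real.norm_eq_abs]
    _ ≤ (|R| + 1) ^ n * (2 * (|R| + 1))⁻¹ ^ n := by gcongr; linarith
    _ = (1 / 2) ^ n := by rw [← mul_pow]; field_simp

end Quasinilpotent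

theorem Ring.norm_choose_le {𝕜 : Type*} [RCLike 𝕜] (r : 𝕜) (n : ℕ) :
    ‖Ring.choose r n‖ ≤ (‖r‖ + 1) ^ n := by
  induction n with
  | zero => simp
  | succ n ih =>
    have step : ((n + 1 : ℕ) : 𝕜) * Ring.choose r (n + 1) = Ring.choose r n * (r - n) := by
      simpa [Nat.choose_succ_self_right, Ring.choose_one_right, nsmul_eq_mul] using
        Ring.choose_smul_choose r (Nat.le_succ n)
    have hnorm : (n + 1) * ‖Ring.choose r (n + 1)‖ = ‖Ring.choose r n‖ * ‖r - n‖ := by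
      have := congrArg norm step
      rwa [norm_mul, norm_mul, RCLike.norm_natCast, Nat.cast_succ] at this
    have hfactor : ‖r - n‖ ≤ (‖r‖ + 1) * (n + 1) := by
      calc ‖r - n‖ ≤ ‖r‖ + n := by
            simpa [RCLike.norm_natCast] using norm_sub_le r (n : 𝕜)
        _ ≤ (‖r‖ + 1) * (n + 1) := by
          nlinarith [norm_nonneg r, (n.cast_nonneg : (0 : ℝ) ≤ n)]
    have hn : (0 : ℝ) < n + 1 := by positivity
    refine le_of_mul_le_mul_left ?_ hn
    calc (n + 1) * ‖Ring.choose r (n + 1)‖ = ‖Ring.choose r n‖ * ‖r - n‖ := hnorm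
      _ ≤ (‖r‖ + 1) ^ n * ((‖r‖ + 1) * (n + 1)) := by gcongr
      _ = (n + 1) * (‖r‖ + 1) ^ (n + 1) := by ring

section BinomialPow

variable {A : Type*} [NormedRing A] [NormedAlgebra ℂ A]

/-- `(1 + a) ^ r` as a binomial series; it converges when `a` is quasinilpotent. -/
noncomputable def binomialPow (r : ℂ) (a : A) : A :=
  ∑' n, Ring.choose r n • a ^ n

theorem Quasinilpotent.summable_norm_choose_smul_pow [CompleteSpace A] {a : A}
    (ha : Quasinilpotent a) (r : ℂ) :
    Summable fun n => ‖Ring.choose r n • a ^ n‖ :=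
  (ha.summable_pow_mul_norm_pow (‖r‖ + 1)).of_nonneg_of_le (fun _ => norm_nonneg _) fun n =>
    (norm_smul_le _ _).trans (by gcongr; exact Ring.norm_choose_le r n)

theorem Quasinilpotent.binomialPow_add [CompleteSpace A] {a : A} (ha : Quasinilpotent a)
    (r s : ℂ) :
    binomialPow (r + s) a = binomialPow r a * binomialPow s a := by
  rw [binomialPow, binomialPow, binomialPow,
    tsum_mul_tsum_eq_tsum_sum_antidiagonal_of_summable_norm
      (ha.summable_norm_choose_smul_pow r) (ha.summable_norm_choose_smul_pow s)]
  refine tsum_congr fun n => ?_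
  rw [Ring.add_choose_eq n (Commute.all r s), Finset.sum_smul]
  refine Finset.sum_congr rfl fun ij hij => ?_
  rw [← mem_antidiagonal.mp hij, pow_add, smul_mul_smul_comm]

theorem binomialPow_zero (a : A) : binomialPow 0 a = 1 := by
  rw [binomialPow, tsum_eq_single 0 fun n hn => by
    simp [Ring.choose_zero_pos ℂ (Nat.pos_of_ne_zero hn)]]
  simp

theorem binomialPow_one (a : A) : binomialPow 1 a = 1 + a := by
  have hchoose (n : ℕ) : Ring.choose (1 : ℂ) n = Nat.choose 1 n := by
    simpa using Ring.choose_natCast (R := ℂ) 1 n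
  rw [binomialPow, tsum_eq_sum (s := range 2) fun n hn => by
    simp [hchoose, Nat.choose_eq_zero_of_lt (show 1 < n by simpa using hn)]]
  simp [Finset.sum_range_succ, hchoose]

theorem Commute.binomialPow_right {a b : A} (h : Commute b a) (r : ℂ) :
    Commute b (binomialPow r a) :=
  Commute.tsum_right b fun n => (h.pow_right n).smul_right _

theorem Quasinilpotent.binomialPow_sub_one [CompleteSpace A] {a : A} (ha : Quasinilpotent a)
    (r : ℂ) :
    Quasinilpotent (binomialPow r a - 1) := by
  set m : A := ∑' n, Ring.choose r (n + 1) • a ^ n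
  have hm : Summable fun n => Ring.choose r (n + 1) • a ^ n := by
    refine Summable.of_norm_bounded
      ((ha.summable_pow_mul_norm_pow (‖r‖ + 1)).mul_left (‖r‖ + 1)) fun n => ?_
    calc ‖Ring.choose r (n + 1) • a ^ n‖ ≤ (‖r‖ + 1) ^ (n + 1) * ‖a ^ n‖ :=
          (norm_smul_le _ _).trans (by gcongr; exact Ring.norm_choose_le r _)
      _ = _ := by ring
  have hsplit : binomialPow r a - 1 = a * m := by
    rw [binomialPow, (ha.summable_norm_choose_smul_pow r).of_norm.tsum_eq_zero_add,
      ← hm.tsum_mul_left]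
    simp [pow_succ']
  rw [hsplit, (Commute.tsum_right a fun n => (Commute.self_pow a n).smul_right _).eq]
  exact (Commute.tsum_left a fun n => (Commute.pow_self a n).smul_left _).quasinilpotent_mul_left
    ha

end BinomialPow

theorem isIdempotentElem_inv_two_smul_one_add {𝕜 A : Type*} [Field 𝕜] [NeZero (2 : 𝕜)]
    [Ring A] [Algebra 𝕜 A] {t : A} (ht : t * t = 1) :
    IsIdempotentElem ((2⁻¹ : 𝕜) • (1 + t)) := by
  have hsq : (1 + t) * (1 + t) = (2 : 𝕜) • (1 + t) := by
    simp only [two_smul, add_mul, mul_add, ht, mul_one, one_mul]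
    abel
  rw [IsIdempotentElem, smul_mul_smul_comm, hsq, smul_smul, mul_assoc,
    inv_mul_cancel₀ two_ne_zero, mul_one]

section Involution

variable {A : Type*} [NormedRing A] [NormedAlgebra ℂ A] [CompleteSpace A]

theorem exists_involution_of_quasinilpotent_mul_self_sub_one {s : A}
    (hs : Quasinilpotent (s * s - 1)) :
    ∃ t : A, t * t = 1 ∧ Commute s t ∧ Quasinilpotent (s - t) := by
  set y := s * s - 1
  -- `t = s (s * s) ^ (-1/2)`
  set r := binomialPow (-2⁻¹) y
  have hsy : Commute s y :=
    ((Commute.refl s).mul_right (Commute.refl s)).sub_right (Commute.one_right s)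
  have hsr : Commute s r := hsy.binomialPow_right _
  have hrr : s * s * (r * r) = 1 := by
    rw [show s * s = binomialPow 1 y by rw [binomialPow_one, add_sub_cancel],
      ← hs.binomialPow_add, ← hs.binomialPow_add]
    norm_num [binomialPow_zero]
  refine ⟨s * r, ?_, (Commute.refl s).mul_right hsr, ?_⟩
  · rw [hsr.symm.mul_mul_mul_comm, hrr]
  · rw [show s - s * r = -s * (r - 1) by noncomm_ring]
    exact (hsr.sub_right (Commute.one_right s)).neg_left.quasinilpotent_mul_left
      (hs.binomialPow_sub_one _)

end Involution

theorem stmt19 {A : Type*} [NormedRing A] [NormedAlgebra ℂ A] [CompleteSpace A] (x : A) :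
    (∃ e w : A, e * e = e ∧ Quasinilpotent w ∧ e * w = w * e ∧ x = e + w) ↔
      Quasinilpotent (x - x ^ 2) := by
  constructor
  · rintro ⟨e, w, he, hw, hew, rfl⟩
    have hsub : e + w - (e + w) ^ 2 = (1 - 2 * e - w) * w := by
      rw [sq, add_mul, mul_add, mul_add, he, ← hew]
      noncomm_ring
    rw [hsub]
    refine Commute.quasinilpotent_mul_left ?_ hw
    exact ((Commute.one_left w).sub_left ((Commute.ofNat_left 2 w).mul_left hew)).sub_left
      (Commute.refl w)
  · intro hq
    have hs : Quasinilpotent ((2 * x - 1) * (2 * x - 1) - 1) := by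
      rw [show (2 * x - 1) * (2 * x - 1) - 1 = -4 * (x - x ^ 2) by noncomm_ring]
      exact (Commute.ofNat_left 4 _).neg_left.quasinilpotent_mul_left hq
    obtain ⟨t, htt, hst, hs_sub_t⟩ := exists_involution_of_quasinilpotent_mul_self_sub_one hs
    refine ⟨(2⁻¹ : ℂ) • (1 + t), (2⁻¹ : ℂ) • (2 * x - 1 - t),
      isIdempotentElem_inv_two_smul_one_add htt, hs_sub_t.smul _, ?_, ?_⟩
    · exact (((Commute.one_left _).add_left (hst.symm.sub_right (Commute.refl t))).smul_left
        _).smul_right _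
    · rw [← smul_add, add_add_sub_cancel, add_sub_cancel, two_mul, smul_add, ← add_smul]
      norm_num
end
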